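/- For every n ≥ 0 and m ∈ {0,1}, the determinant of the (n+1)×(n+1) Hankel matrix whose (i,j)-entry is the Catalan number c_{m+i+j} (indices i,j from 0 to n) equals 1. -/

import Mathlib

/-!
Call `b` a Stieltjes table with diagonal weights `a` if its rows are obtained from the unit
vector `b 0 = e₀` by repeatedly applying the symmetric tridiagonal operator `J` with diagonal
`a` and all off-diagonal entries `1`; thus `b i = Jⁱ e₀`, and `b` is lower unitriangular.
Symmetry of `J` gives `⟨b i, b j⟩ = ⟨Jⁱ e₀, Jʲ e₀⟩ = ⟨e₀, Jⁱ⁺ʲ e₀⟩ = b (i + j) 0`, so the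
Hankel matrix of the moments `b k 0` factors as `L Lᵀ` with `L` unitriangular.

The ballot numbers `b i k = C(2i + m, i + k + m) - C(2i + m, i + k + m + 1)` form such a table,
with diagonal `1, 2, 2, …` and moments `cₖ` for `m = 0`, and with diagonal `2, 2, 2, …` and
moments `cₖ₊₁` for `m = 1`.
-/

open Finset

structure IsStieltjesTable {R : Type*} [CommRing R] (a : ℕ → R) (b : ℕ → ℕ → R) : Prop where
  zero_row : ∀ k, b 0 k = if k = 0 then 1 else 0
  succ_zero : ∀ i, b (i + 1) 0 = a 0 * b i 0 + b i 1
  succ_succ : ∀ i k, b (i + 1) (k + 1) = b i k + a (k + 1) * b i (k + 1) + b i (k + 2)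

namespace IsStieltjesTable

variable {R : Type*} [CommRing R] {a : ℕ → R} {b : ℕ → ℕ → R}

theorem eq_zero_of_lt (hb : IsStieltjesTable a b) {i k : ℕ} (h : i < k) : b i k = 0 := by
  induction i generalizing k with
  | zero => simp [hb.zero_row, h.ne']
  | succ i ih =>
    obtain ⟨k, rfl⟩ : ∃ k', k = k' + 1 := ⟨k - 1, by omega⟩
    rw [hb.succ_succ, ih (by omega), ih (by omega), ih (by omega)]
    ring

theorem apply_self (hb : IsStieltjesTable a b) (i : ℕ) : b i i = 1 := by
  induction i with
  | zero => simp [hb.zero_row]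
  | succ i ih =>
    rw [hb.succ_succ, ih, hb.eq_zero_of_lt (by omega), hb.eq_zero_of_lt (by omega)]
    ring

/-- Discrete Lagrange identity for the symmetric operator `J`. -/
theorem sum_range_succ_mul_sub_mul (hb : IsStieltjesTable a b) (i j N : ℕ) :
    ∑ k ∈ range (N + 1), (b (i + 1) k * b j k - b i k * b (j + 1) k) =
      b i (N + 1) * b j N - b i N * b j (N + 1) := by
  induction N with
  | zero => simp only [zero_add, sum_range_one, hb.succ_zero]; ring
  | succ N ih => rw [sum_range_succ, ih, hb.succ_succ, hb.succ_succ]; ring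

theorem sum_range_row_succ_mul (hb : IsStieltjesTable a b) {i N : ℕ} (hi : i < N) (j : ℕ) :
    ∑ k ∈ range (N + 1), b (i + 1) k * b j k = ∑ k ∈ range (N + 1), b i k * b (j + 1) k := by
  rw [← sub_eq_zero, ← sum_sub_distrib, hb.sum_range_succ_mul_sub_mul,
    hb.eq_zero_of_lt hi, hb.eq_zero_of_lt (by omega : i < N + 1)]
  ring

theorem sum_range_mul_eq_moment (hb : IsStieltjesTable a b) {i N : ℕ} (hi : i < N) (j : ℕ) :
    ∑ k ∈ range N, b i k * b j k = b (i + j) 0 := by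
  induction i generalizing j with
  | zero => simp [hb.zero_row, hi]
  | succ i ih =>
    obtain ⟨N, rfl⟩ : ∃ N', N = N' + 1 := ⟨N - 1, by omega⟩
    rw [hb.sum_range_row_succ_mul (by omega), ih (by omega), add_right_comm, add_assoc]

theorem det_hankel_eq_one (hb : IsStieltjesTable a b) (n : ℕ) :
    (Matrix.of fun i j : Fin (n + 1) => b (i + j) 0).det = 1 := by
  let L : Matrix (Fin (n + 1)) (Fin (n + 1)) R := .of fun i k => b i k
  have hL : L.det = 1 := by
    rw [Matrix.det_of_isLowerTriangular L fun i k hik => hb.eq_zero_of_lt hik]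
    simp [L, hb.apply_self]
  have hfactor : (Matrix.of fun i j : Fin (n + 1) => b (i + j) 0) = L * L.transpose := by
    ext i j
    simp only [Matrix.of_apply, Matrix.mul_apply, Matrix.transpose_apply, L]
    rw [Fin.sum_univ_eq_sum_range (fun k => b i k * b j k), hb.sum_range_mul_eq_moment i.isLt]
  rw [hfactor, Matrix.det_mul, Matrix.det_transpose, hL, one_mul]

end IsStieltjesTable

def ballot (N j : ℕ) : ℤ := N.choose j - N.choose (j + 1)

theorem ballot_succ_succ (N j : ℕ) : ballot (N + 1) (j + 1) = ballot N j + ballot N (j + 1) := by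
  simp only [ballot, Nat.choose_succ_succ', Nat.cast_add]
  ring

theorem ballot_reflect (j k : ℕ) : ballot (j + k + 1) j = -ballot (j + k + 1) k := by
  have h₁ : (j + k + 1).choose j = (j + k + 1).choose (k + 1) := by
    rw [add_assoc, Nat.choose_symm_add]
  have h₂ : (j + k + 1).choose (j + 1) = (j + k + 1).choose k := by
    rw [add_right_comm, Nat.choose_symm_add]
  simp only [ballot, h₁, h₂]
  ring

theorem ballot_two_mul_add_one_self (n : ℕ) : ballot (2 * n + 1) n = 0 := by
  have h := ballot_reflect n n
  rw [← two_mul] at h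
  omega

theorem ballot_two_mul_self (n : ℕ) : ballot (2 * n) n = catalan n := by
  have hsucc : ((2 * n).choose (n + 1) : ℤ) * (n + 1) = (2 * n).choose n * n := by
    rw [← Nat.cast_succ, ← Nat.cast_mul, Nat.choose_succ_right_eq, show 2 * n - n = n by omega,
      Nat.cast_mul]
  have hcat : ((n : ℤ) + 1) * catalan n = (2 * n).choose n := by
    exact_mod_cast succ_mul_catalan_eq_centralBinom n
  apply mul_left_cancel₀ (show (n + 1 : ℤ) ≠ 0 by positivity)
  rw [ballot]
  linear_combination -hsucc - hcat

theorem ballot_two_mul_add_one_succ (n : ℕ) : ballot (2 * n + 1) (n + 1) = catalan (n + 1) := by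
  have h := ballot_succ_succ (2 * n + 1) n
  rw [ballot_two_mul_add_one_self, zero_add, show 2 * n + 1 + 1 = 2 * (n + 1) by ring,
    ballot_two_mul_self] at h
  exact h.symm

def catalanTable (m i k : ℕ) : ℤ := ballot (2 * i + m) (i + k + m)

theorem isStieltjesTable_catalanTable {m : ℕ} (hm : m = 0 ∨ m = 1) :
    IsStieltjesTable (fun k => if k = 0 then (m + 1 : ℤ) else 2) (catalanTable m) where
  zero_row k := by
    rcases k with _ | k
    · simp [catalanTable, ballot]
    · simp [catalanTable, ballot, Nat.choose_eq_zero_of_lt (by omega : m < k + 1 + m),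
        Nat.choose_eq_zero_of_lt (by omega : m < k + 1 + m + 1)]
  succ_zero i := by
    have hfirst : ballot (2 * i + m + 1) (i + m) = m * ballot (2 * i + m) (i + m) := by
      rcases hm with rfl | rfl
      · simpa using ballot_two_mul_add_one_self i
      · rw [show 2 * i + 1 + 1 = 2 * (i + 1) by ring, ballot_two_mul_self,
          ← ballot_two_mul_add_one_succ]
        simp
    simp only [catalanTable, if_true]
    rw [show 2 * (i + 1) + m = 2 * i + m + 1 + 1 by ring, show i + 1 + 0 + m = i + m + 1 by ring,
      ballot_succ_succ, ballot_succ_succ, hfirst, add_zero]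
    ring
  succ_succ i k := by
    simp only [catalanTable]
    rw [show 2 * (i + 1) + m = 2 * i + m + 1 + 1 by ring,
      show i + 1 + (k + 1) + m = i + k + m + 1 + 1 by ring, ballot_succ_succ, ballot_succ_succ,
      ballot_succ_succ]
    simp only [Nat.add_eq_zero_iff, one_ne_zero, and_false, if_false]
    rw [show i + (k + 1) + m = i + k + m + 1 by ring,
      show i + (k + 2) + m = i + k + m + 1 + 1 by ring]
    ring

theorem catalanTable_zero_right {m : ℕ} (hm : m = 0 ∨ m = 1) (i : ℕ) :
    catalanTable m i 0 = catalan (m + i) := by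
  rcases hm with rfl | rfl
  · simpa [catalanTable] using ballot_two_mul_self i
  · simpa [catalanTable, add_comm 1] using ballot_two_mul_add_one_succ i

theorem hankel_catalan_det (n m : ℕ) (hm : m = 0 ∨ m = 1) :
    Matrix.det (Matrix.of fun i j : Fin (n + 1) =>
      (catalan (m + (i : ℕ) + (j : ℕ)) : ℤ)) = 1 := by
  rw [← (isStieltjesTable_catalanTable hm).det_hankel_eq_one n]
  congr 1
  ext i j
  rw [Matrix.of_apply, Matrix.of_apply, catalanTable_zero_right hm, add_assoc]
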